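/- Let n ≥ 1 and D_1 ≥ 2 be integers. Let Q(ζ) = (Q_{ij}(ζ)) be an n×n matrix whose entries are polynomials in ζ, each divisible by ζ^{D_1−1}, with Q(ζ) invertible for every |ζ| = 1, and let S_{ij} ∈ ℂ[X] be arbitrary polynomials. Let G̃₂(ζ) be the 2n×2n matrix whose (2i−1,2j−1) entry is δ_{ij}, whose (2i,2j−1) entry is −i·δ_{ij}, whose (2i−1,2j) entry is Q_{ij}(ζ) + S_{ij}(conj ζ), and whose (2i,2j) entry is i·(Q_{ij}(ζ) − S_{ij}(conj ζ)) (it is invertible for |ζ| = 1 since det G̃₂ = (2i)^n det Q). Suppose there exist integers κ_1, …, κ_{2n} and a continuous map Θ from the closed unit disc to the invertible 2n×2n complex matrices, holomorphic on the open unit disc, such that −Θ(ζ) · (conj G̃₂(ζ))^{-1} · G̃₂(ζ) = Λ(ζ) · conj(Θ(ζ)) for all |ζ| = 1, where Λ(ζ) = diag(ζ^{κ_1},…,ζ^{κ_{2n}}) and conj denotes entrywise complex conjugation. Then κ_j ≥ D_1 − 1 for every j = 1,…,2n. -/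

import Mathlib

open ComplexConjugate

noncomputable section

/-- The `2n × 2n` matrix `G̃₂(ζ)`: rows/columns are indexed by pairs `(i,a)` with
`a = 0` corresponding to the odd row/column `2i−1` and `a = 1` to the even one `2i`. -/
def Gtilde2 (n : ℕ) (Q S : Fin n → Fin n → Polynomial ℂ) (ζ : ℂ) :
    Matrix (Fin n × Fin 2) (Fin n × Fin 2) ℂ :=
  Matrix.of fun p q =>
    if p.2 = 0 then
      (if q.2 = 0 then (if p.1 = q.1 then (1 : ℂ) else 0)
       else (Q p.1 q.1).eval ζ + (S p.1 q.1).eval (conj ζ))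
    else
      (if q.2 = 0 then (if p.1 = q.1 then -Complex.I else 0)
       else Complex.I * ((Q p.1 q.1).eval ζ - (S p.1 q.1).eval (conj ζ)))

/-!
Write `Q = ζ^(D₁-1) q`. With the polynomial block matrices `P` and `L` one has
`G̃₂ · conj P = -ζ^(D₁-1) conj G̃₂ · L` on the unit circle, so the factorisation turns into
`Λ · conj (Θ P) = ζ^(D₁-1) Θ L`. If `κ_p < D₁ - 1`, then the `p`-th rows `b = (Θ P)_p` and
`a = (Θ L)_p` satisfy `conj b = ζ^k a` on the circle with `k > 0`. Hence `ζ^k ∑ a_r b_r` is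
holomorphic on the disc, vanishes at `0` and equals `‖b‖²` on the circle; by the mean value
property `b` vanishes at some point of the circle. Since `q`, hence `P`, is invertible there,
the `p`-th row of `Θ` vanishes at that point, contradicting the invertibility of `Θ`.
-/

open Polynomial Metric Real
open scoped Matrix

theorem DiffContOnCl.fun_sum {E F : Type*} [NormedAddCommGroup E] [NormedSpace ℂ E]
    [NormedAddCommGroup F] [NormedSpace ℂ F] {ι : Type*} {t : Finset ι} {f : ι → E → F}
    {s : Set E} (h : ∀ i ∈ t, DiffContOnCl ℂ (f i) s) :
    DiffContOnCl ℂ (fun x => ∑ i ∈ t, f i x) s :=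
  ⟨DifferentiableOn.fun_sum fun i hi => (h i hi).1,
    continuousOn_finsetSum _ fun i hi => (h i hi).2⟩

theorem diffContOnCl_mul_map_eval_apply {ι : Type*} [Fintype ι] {Θ : ℂ → Matrix ι ι ℂ}
    {s : Set ℂ} (hΘ : ∀ p q, DiffContOnCl ℂ (fun ζ => Θ ζ p q) s) (M : Matrix ι ι ℂ[X])
    (p r : ι) : DiffContOnCl ℂ (fun ζ => (Θ ζ * M.map (eval ζ)) p r) s :=
  DiffContOnCl.fun_sum fun t _ => (hΘ p t).smul (M t r).differentiable.diffContOnCl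

theorem exists_mem_sphere_eq_zero_of_circleAverage_eq_zero {ψ : ℂ → ℝ}
    (hcont : ContinuousOn ψ (sphere 0 1)) (hnonneg : ∀ ζ ∈ sphere (0 : ℂ) 1, 0 ≤ ψ ζ)
    (havg : circleAverage ψ 0 1 = 0) : ∃ ζ ∈ sphere (0 : ℂ) 1, ψ ζ = 0 := by
  by_contra! hne
  have hpos : 0 < ∫ θ in (0 : ℝ)..2 * π, ψ (circleMap 0 1 θ) := by
    have hmem θ : circleMap 0 1 θ ∈ sphere (0 : ℂ) 1 := circleMap_mem_sphere 0 zero_le_one θ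
    refine intervalIntegral.intervalIntegral_pos_of_pos_on ?_
      (fun θ _ => (hnonneg _ (hmem θ)).lt_of_ne' (hne _ (hmem θ))) two_pi_pos
    exact (hcont.comp_continuous (continuous_circleMap 0 1) hmem).intervalIntegrable _ _
  rw [circleAverage_def, smul_eq_mul] at havg
  exact (mul_pos (by positivity) hpos).ne' havg

theorem exists_mem_sphere_forall_eq_zero_of_conj_eq_pow_mul {ι : Type*} [Fintype ι]
    {f g : ι → ℂ → ℂ} (hf : ∀ r, DiffContOnCl ℂ (f r) (ball 0 1))
    (hg : ∀ r, DiffContOnCl ℂ (g r) (ball 0 1)) {k : ℕ} (hk : k ≠ 0)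
    (hfg : ∀ ζ ∈ sphere (0 : ℂ) 1, ∀ r, conj (g r ζ) = ζ ^ k * f r ζ) :
    ∃ ζ ∈ sphere (0 : ℂ) 1, ∀ r, g r ζ = 0 := by
  set ψ : ℂ → ℝ := fun ζ => ∑ r, ‖g r ζ‖ ^ 2
  have hφ : DiffContOnCl ℂ (fun ζ => ζ ^ k * ∑ r, f r ζ * g r ζ) (ball 0 |1|) := by
    rw [abs_one]
    exact (differentiable_pow k).diffContOnCl.smul
      (DiffContOnCl.fun_sum fun r _ => (hf r).smul (hg r))
  have hφψ : Set.EqOn (fun ζ => ζ ^ k * ∑ r, f r ζ * g r ζ) (fun ζ => (ψ ζ : ℂ))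
      (sphere 0 |1|) := by
    intro ζ hζ
    rw [abs_one] at hζ
    simp only [ψ, Complex.ofReal_sum, Finset.mul_sum, ← mul_assoc, ← hfg ζ hζ,
      Complex.conj_mul']
    push_cast
    rfl
  have havg : circleAverage ψ 0 1 = 0 := by
    have h := hφ.circleAverage
    rw [circleAverage_congr_sphere hφψ, zero_pow hk, zero_mul, circleAverage_def,
      intervalIntegral.integral_ofReal, Complex.real_smul] at h
    rw [circleAverage_def, smul_eq_mul]
    exact_mod_cast h
  have hψcont : ContinuousOn ψ (sphere 0 1) := by
    have hsub : sphere (0 : ℂ) 1 ⊆ closure (ball 0 1) := by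
      rw [closure_ball 0 one_ne_zero]; exact sphere_subset_closedBall
    exact continuousOn_finsetSum _ fun r _ => ((hg r).2.mono hsub).norm.pow 2
  obtain ⟨ζ, hζ, hψ⟩ := exists_mem_sphere_eq_zero_of_circleAverage_eq_zero hψcont
    (fun ζ _ => by positivity) havg
  refine ⟨ζ, hζ, fun r => ?_⟩
  simpa using (Finset.sum_eq_zero_iff_of_nonneg fun r _ => sq_nonneg ‖g r ζ‖).1 hψ r
    (Finset.mem_univ r)

section LinearAlgebra

variable {ι R : Type*} [Fintype ι] [DecidableEq ι] [CommRing R]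

theorem Matrix.isUnit_det_of_neg_mul_inv_mul_eq_mul [Nonempty ι] [Nontrivial R]
    {Θ H G D E : Matrix ι ι R} (hD : IsUnit D) (hE : IsUnit E)
    (h : -(Θ * H⁻¹ * G) = D * E) : IsUnit H.det := by
  by_contra hH
  rw [Matrix.nonsing_inv_apply_not_isUnit _ hH, mul_zero, zero_mul, neg_zero] at h
  exact not_isUnit_zero (h ▸ hD.mul hE)

theorem Matrix.mul_map_mul_eq_smul_of_neg_mul_inv_mul_eq (σ : R →+* R)
    {Θ H G Λ P L : Matrix ι ι R} {c : R} (hH : IsUnit H.det)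
    (hfact : -(Θ * H⁻¹ * G) = Λ * Θ.map σ) (hGP : G * P.map σ = -c • (H * L)) :
    Λ * (Θ * P).map σ = c • (Θ * L) :=
  calc Λ * (Θ * P).map σ = (Λ * Θ.map σ) * P.map σ := by rw [Matrix.map_mul, Matrix.mul_assoc]
    _ = -(Θ * H⁻¹ * (G * P.map σ)) := by rw [← hfact, neg_mul, Matrix.mul_assoc]
    _ = c • (Θ * (H⁻¹ * H) * L) := by
      rw [hGP, Matrix.mul_smul, neg_smul, neg_neg, Matrix.mul_assoc, Matrix.mul_assoc,
        Matrix.mul_assoc]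
    _ = c • (Θ * L) := by rw [Matrix.nonsing_inv_mul _ hH, Matrix.mul_one]

end LinearAlgebra

theorem isUnit_eval_of_eq_X_pow_mul {ι : Type*} [Fintype ι] [DecidableEq ι] {m : ℕ}
    {Q q : ι → ι → ℂ[X]} (hq : ∀ i j, Q i j = X ^ m * q i j) {ζ : ℂ} (hζ : ζ ≠ 0)
    (hQ : IsUnit (Matrix.of fun i j => (Q i j).eval ζ)) :
    IsUnit (Matrix.of fun i j => (q i j).eval ζ) := by
  have hQq : (Matrix.of fun i j => (Q i j).eval ζ) =
      Units.mk0 _ (pow_ne_zero m hζ) • Matrix.of fun i j => (q i j).eval ζ := by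
    ext i j; simp [hq, Units.smul_def]
  exact (isUnit_smul_iff _ _).1 (hQq ▸ hQ)

namespace Gtilde2

variable {n : ℕ}

/-- In block form `P = [[q, -S*], [0, 1]]`, where `S*` has the conjugated coefficients of `S`. -/
def P (q S : Fin n → Fin n → ℂ[X]) : Matrix (Fin n × Fin 2) (Fin n × Fin 2) ℂ[X] :=
  Matrix.of fun r c =>
    if r.2 = 0 then (if c.2 = 0 then q r.1 c.1 else -(S r.1 c.1).map (starRingEnd ℂ))
    else (if c.2 = 0 then 0 else if r.1 = c.1 then 1 else 0)

/-- In block form `L = [[S*, -q], [-1, 0]]`. -/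
def L (q S : Fin n → Fin n → ℂ[X]) : Matrix (Fin n × Fin 2) (Fin n × Fin 2) ℂ[X] :=
  Matrix.of fun r c =>
    if r.2 = 0 then (if c.2 = 0 then (S r.1 c.1).map (starRingEnd ℂ) else -q r.1 c.1)
    else (if c.2 = 0 then (if r.1 = c.1 then -1 else 0) else 0)

theorem mul_map_conj_P {m : ℕ} {Q S q : Fin n → Fin n → ℂ[X]} (hq : ∀ i j, Q i j = X ^ m * q i j)
    {ζ : ℂ} (hζ : ζ * conj ζ = 1) :
    Gtilde2 n Q S ζ * ((P q S).map (eval ζ)).map (starRingEnd ℂ) =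
      -(ζ ^ m) • ((Gtilde2 n Q S ζ).map (starRingEnd ℂ) * (L q S).map (eval ζ)) := by
  have hpow : ζ ^ m * conj ζ ^ m = 1 := by rw [← mul_pow, hζ, one_pow]
  have hS i j : ((S i j).map (starRingEnd ℂ)).eval ζ = conj ((S i j).eval (conj ζ)) := by
    rw [eval_map, ← eval₂_hom, Complex.conj_conj]
  ext ⟨i, a⟩ ⟨j, c⟩
  fin_cases a <;> fin_cases c <;>
    simp only [Gtilde2, P, L, Matrix.mul_apply, Matrix.map_apply, Matrix.smul_apply,
      Matrix.of_apply, Fintype.sum_prod_type, Fin.sum_univ_two, hq, hS, apply_ite (eval ζ),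
      eval_mul, eval_pow, eval_X, eval_neg, eval_one, eval_zero, apply_ite (starRingEnd ℂ),
      map_add, map_mul, map_pow, map_neg, map_sub, map_one, map_zero, Complex.conj_I,
      Complex.conj_conj, smul_eq_mul, Fin.mk_zero, Fin.mk_one, Fin.reduceEq,
      if_true, if_false, ite_mul, mul_ite, zero_mul, mul_zero,
      one_mul, mul_one, neg_mul, mul_neg, neg_neg, Finset.sum_ite_eq, Finset.sum_ite_eq',
      Finset.mem_univ, Finset.sum_add_distrib, Finset.sum_neg_distrib]
  · linear_combination (-conj ((q i j).eval ζ)) * hpow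
  · ring
  · linear_combination (Complex.I * conj ((q i j).eval ζ)) * hpow
  · ring

theorem conj_mul_P_apply {m : ℕ} {Q S q : Fin n → Fin n → ℂ[X]}
    (hq : ∀ i j, Q i j = X ^ m * q i j) {κ : Fin n × Fin 2 → ℤ} {p : Fin n × Fin 2} {k : ℕ}
    (hκk : (m : ℤ) = κ p + k) {Θ : Matrix (Fin n × Fin 2) (Fin n × Fin 2) ℂ} (hΘ : IsUnit Θ)
    {ζ : ℂ} (hζ : ‖ζ‖ = 1)
    (hfact : -(Θ * ((Gtilde2 n Q S ζ).map (starRingEnd ℂ))⁻¹ * Gtilde2 n Q S ζ) =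
      Matrix.diagonal (fun p => ζ ^ κ p) * Θ.map (starRingEnd ℂ)) (r : Fin n × Fin 2) :
    conj ((Θ * (P q S).map (eval ζ)) p r) = ζ ^ k * (Θ * (L q S).map (eval ζ)) p r := by
  have hζ0 : ζ ≠ 0 := by rintro rfl; simp at hζ
  have hζζ : ζ * conj ζ = 1 := by rw [Complex.mul_conj', hζ]; simp
  have : Nonempty (Fin n × Fin 2) := ⟨p⟩
  have hΛ : IsUnit (Matrix.diagonal fun p => ζ ^ κ p) :=
    Matrix.isUnit_diagonal.2 <| Pi.isUnit_iff.2 fun _ => (zpow_ne_zero _ hζ0).isUnit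
  have hH := Matrix.isUnit_det_of_neg_mul_inv_mul_eq_mul hΛ
    (hΘ.map (starRingEnd ℂ).mapMatrix) hfact
  have h := Matrix.mul_map_mul_eq_smul_of_neg_mul_inv_mul_eq _ hH hfact (mul_map_conj_P hq hζζ)
  have hpr := congrFun (congrFun h p) r
  rw [Matrix.diagonal_mul, Matrix.map_apply, Matrix.smul_apply, smul_eq_mul, ← zpow_natCast,
    hκk, zpow_add₀ hζ0, zpow_natCast, mul_assoc] at hpr
  exact mul_left_cancel₀ (zpow_ne_zero _ hζ0) hpr

theorem eq_zero_of_vecMul_map_eval_P_eq_zero {q S : Fin n → Fin n → ℂ[X]} {ζ : ℂ}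
    (hq : IsUnit (Matrix.of fun i j => (q i j).eval ζ)) {v : Fin n × Fin 2 → ℂ}
    (hv : v ᵥ* (P q S).map (eval ζ) = 0) : v = 0 := by
  have h0 : (fun l => v (l, 0)) = 0 := by
    refine Matrix.vecMul_injective_of_isUnit hq (funext fun j => ?_)
    simpa [P, Matrix.vecMul, dotProduct, Fintype.sum_prod_type] using congrFun hv (j, 0)
  funext ⟨l, e⟩
  fin_cases e
  · exact congrFun h0 l
  · simpa [P, Matrix.vecMul, dotProduct, Fintype.sum_prod_type, congrFun h0,
      apply_ite (eval ζ)] using congrFun hv (l, 1)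

end Gtilde2

theorem stmt13_general
    (n D1 : ℕ)
    (Q S : Fin n → Fin n → Polynomial ℂ)
    (hQdvd : ∀ i j, (Polynomial.X : Polynomial ℂ) ^ (D1 - 1) ∣ Q i j)
    (hQinv : ∀ ζ : ℂ, ‖ζ‖ = 1 → IsUnit (Matrix.of fun i j => (Q i j).eval ζ))
    (κ : Fin n × Fin 2 → ℤ)
    (Θ : ℂ → Matrix (Fin n × Fin 2) (Fin n × Fin 2) ℂ)
    (hΘcont : ∀ p q, ContinuousOn (fun ζ => Θ ζ p q) (Metric.closedBall 0 1))
    (hΘdiff : ∀ p q, DifferentiableOn ℂ (fun ζ => Θ ζ p q) (Metric.ball 0 1))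
    (hΘinv : ∀ ζ ∈ Metric.closedBall (0 : ℂ) 1, IsUnit (Θ ζ))
    (hfact : ∀ ζ : ℂ, ‖ζ‖ = 1 →
      -(Θ ζ * ((Gtilde2 n Q S ζ).map (starRingEnd ℂ))⁻¹ * Gtilde2 n Q S ζ) =
        Matrix.diagonal (fun p => ζ ^ κ p) * (Θ ζ).map (starRingEnd ℂ)) :
    ∀ p, (D1 : ℤ) - 1 ≤ κ p := by
  intro p
  choose q hq using hQdvd
  have hΘ p q : DiffContOnCl ℂ (fun ζ => Θ ζ p q) (ball 0 1) :=
    ⟨hΘdiff p q, by rw [closure_ball 0 one_ne_zero]; exact hΘcont p q⟩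
  suffices ((D1 - 1 : ℕ) : ℤ) ≤ κ p by omega
  by_contra! hlt
  obtain ⟨k, hk, hκk⟩ : ∃ k : ℕ, k ≠ 0 ∧ ((D1 - 1 : ℕ) : ℤ) = κ p + k :=
    ⟨(((D1 - 1 : ℕ) : ℤ) - κ p).toNat, by omega, by omega⟩
  obtain ⟨ζ, hζ, hrow⟩ := exists_mem_sphere_forall_eq_zero_of_conj_eq_pow_mul
    (diffContOnCl_mul_map_eval_apply hΘ (Gtilde2.L q S) p)
    (diffContOnCl_mul_map_eval_apply hΘ (Gtilde2.P q S) p) hk fun ζ hζ =>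
      Gtilde2.conj_mul_P_apply hq hκk (hΘinv ζ (sphere_subset_closedBall hζ))
        (mem_sphere_zero_iff_norm.1 hζ) (hfact ζ (mem_sphere_zero_iff_norm.1 hζ))
  have hΘp : Θ ζ p = 0 := Gtilde2.eq_zero_of_vecMul_map_eval_P_eq_zero
    (isUnit_eval_of_eq_X_pow_mul hq (ne_zero_of_mem_unit_sphere ⟨ζ, hζ⟩)
      (hQinv ζ (mem_sphere_zero_iff_norm.1 hζ))) (funext hrow)
  exact ((Matrix.isUnit_iff_isUnit_det _).1 (hΘinv ζ (sphere_subset_closedBall hζ))).ne_zero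
    (Matrix.det_eq_zero_of_row_eq_zero p (congrFun hΘp))

theorem stmt13
    (n D1 : ℕ) (hn : 1 ≤ n) (hD1 : 2 ≤ D1)
    (Q S : Fin n → Fin n → Polynomial ℂ)
    (hQdvd : ∀ i j, (Polynomial.X : Polynomial ℂ) ^ (D1 - 1) ∣ Q i j)
    (hQinv : ∀ ζ : ℂ, ‖ζ‖ = 1 → IsUnit (Matrix.of fun i j => (Q i j).eval ζ))
    (κ : Fin n × Fin 2 → ℤ)
    (Θ : ℂ → Matrix (Fin n × Fin 2) (Fin n × Fin 2) ℂ)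
    (hΘcont : ∀ p q, ContinuousOn (fun ζ => Θ ζ p q) (Metric.closedBall 0 1))
    (hΘdiff : ∀ p q, DifferentiableOn ℂ (fun ζ => Θ ζ p q) (Metric.ball 0 1))
    (hΘinv : ∀ ζ ∈ Metric.closedBall (0 : ℂ) 1, IsUnit (Θ ζ))
    (hfact : ∀ ζ : ℂ, ‖ζ‖ = 1 →
      -(Θ ζ * ((Gtilde2 n Q S ζ).map (starRingEnd ℂ))⁻¹ * Gtilde2 n Q S ζ) =
        Matrix.diagonal (fun p => ζ ^ κ p) * (Θ ζ).map (starRingEnd ℂ)) :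
    ∀ p, (D1 : ℤ) - 1 ≤ κ p :=
  stmt13_general n D1 Q S hQdvd hQinv κ Θ hΘcont hΘdiff hΘinv hfact
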